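/- arXiv:2508.00379 — 4 statements merged into one kernel-verified Lean document; each statement's English description precedes it below -/
import Mathlib

section
/- Let A and B be invertible N×N complex matrices, let p₁,…,p_N be positive reals, let φ₁,…,φ_N be complex numbers of unit modulus, and set Ψ = diag(p₁φ₁,…,p_Nφ_N) and P = diag(p₁,…,p_N). Then (ΨᴴAΨ) ⊗ (ΨᴴBΨ) is invertible and trace(((ΨᴴAΨ) ⊗ (ΨᴴBΨ))⁻¹) = trace(A⁻¹·P⁻²) · trace(B⁻¹·P⁻²). -/
open Matrix
open scoped Kronecker

/-- With `Ψ = diag(p₁φ₁,…,p_Nφ_N)` (p_i > 0 real, |φ_i| = 1) and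
`P = diag(p₁,…,p_N)`, for invertible `A`, `B` the Kronecker product
`(Ψᴴ A Ψ) ⊗ₖ (Ψᴴ B Ψ)` is invertible and
`trace (((Ψᴴ A Ψ) ⊗ₖ (Ψᴴ B Ψ))⁻¹) = trace (A⁻¹ P⁻²) · trace (B⁻¹ P⁻²)`. -/
theorem crb_kronecker_factorization {N : ℕ}
    (A B : Matrix (Fin N) (Fin N) ℂ) (hA : IsUnit A) (hB : IsUnit B)
    (p : Fin N → ℝ) (hp : ∀ i, 0 < p i)
    (φ : Fin N → ℂ) (hφ : ∀ i, ‖φ i‖ = 1)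
    (Ψ : Matrix (Fin N) (Fin N) ℂ) (hΨ : Ψ = Matrix.diagonal (fun i => (p i : ℂ) * φ i))
    (P : Matrix (Fin N) (Fin N) ℂ) (hP : P = Matrix.diagonal (fun i => (p i : ℂ))) :
    IsUnit ((Ψᴴ * A * Ψ) ⊗ₖ (Ψᴴ * B * Ψ)) ∧
      ((Ψᴴ * A * Ψ) ⊗ₖ (Ψᴴ * B * Ψ))⁻¹.trace
        = (A⁻¹ * (P ^ 2)⁻¹).trace * (B⁻¹ * (P ^ 2)⁻¹).trace := by
  have hne : ∀ i, ((p i : ℂ) * φ i) ≠ 0 := by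
    intro i
    refine mul_ne_zero ?_ ?_
    · exact_mod_cast (hp i).ne'
    · intro h; simpa [h] using hφ i
  have hΨu : IsUnit Ψ := by
    rw [hΨ, Matrix.isUnit_diagonal]
    exact IsUnit.of_mul_eq_one (fun i => ((p i : ℂ) * φ i)⁻¹)
      (funext fun i => mul_inv_cancel₀ (hne i))
  have hΨHu : IsUnit Ψᴴ := (Matrix.isUnit_conjTranspose Ψ).mpr hΨu
  have h1 : IsUnit (Ψᴴ * A * Ψ) := (hΨHu.mul hA).mul hΨu
  have h2 : IsUnit (Ψᴴ * B * Ψ) := (hΨHu.mul hB).mul hΨu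
  have hPP : Ψ * Ψᴴ = P ^ 2 := by
    rw [hΨ, hP, Matrix.diagonal_conjTranspose, Matrix.diagonal_mul_diagonal, sq,
      Matrix.diagonal_mul_diagonal]
    refine congrArg Matrix.diagonal (funext fun i => ?_)
    have hφi : φ i * (starRingEnd ℂ) (φ i) = 1 := by
      rw [Complex.mul_conj, Complex.normSq_eq_norm_sq, hφ i]; norm_num
    simp only [Pi.star_apply, star_mul', Complex.star_def, Complex.conj_ofReal]
    calc (p i : ℂ) * φ i * ((p i : ℂ) * (starRingEnd ℂ) (φ i))
        = (p i : ℂ) * (p i : ℂ) * (φ i * (starRingEnd ℂ) (φ i)) := by ring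
      _ = (p i : ℂ) * (p i : ℂ) := by rw [hφi, mul_one]
  have hkey : ∀ (M : Matrix (Fin N) (Fin N) ℂ), IsUnit M →
      (Ψᴴ * M * Ψ)⁻¹.trace = (M⁻¹ * (P ^ 2)⁻¹).trace := by
    intro M hM
    rw [Matrix.mul_inv_rev, Matrix.mul_inv_rev, Matrix.trace_mul_comm, Matrix.mul_assoc,
      ← Matrix.mul_inv_rev, hPP]
  constructor
  · rw [Matrix.isUnit_iff_isUnit_det, Matrix.det_kronecker, Fintype.card_fin]
    exact ((((Matrix.isUnit_iff_isUnit_det _).mp h1).pow N).mul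
      (((Matrix.isUnit_iff_isUnit_det _).mp h2).pow N))
  · rw [Matrix.inv_kronecker, Matrix.trace_kronecker, hkey A hA, hkey B hB]
end

section
/- Let M be an n×n Hermitian positive definite complex matrix with n ≥ 1. Then every diagonal entry M_ii is a positive real number and trace(M⁻¹) ≥ Σ_{i=1}^{n} 1/M_ii. -/
open Matrix
open scoped ComplexOrder

lemma key_ineq {n : ℕ} (M : Matrix (Fin n) (Fin n) ℂ) (hM : M.PosDef) (i : Fin n) :
    1 ≤ (M i i).re * (M⁻¹ i i).re := by
  letI : SeminormedAddCommGroup (Fin n → ℂ) :=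
    Matrix.toSeminormedAddCommGroup M hM.posSemidef
  letI : InnerProductSpace ℂ (Fin n → ℂ) := Matrix.toInnerProductSpace M hM.posSemidef
  set x : Fin n → ℂ := Pi.single i 1 with hx
  set y : Fin n → ℂ := M⁻¹ *ᵥ x with hy
  have hsx : star x = x := by
    simp [hx, ← Pi.single_star]
  have hMy : M *ᵥ y = x := by
    rw [hy, mulVec_mulVec, mul_nonsing_inv _ (isUnit_iff_isUnit_det _ |>.1 hM.isUnit),
      one_mulVec]
  have hxy : (inner ℂ x y : ℂ) = 1 := by
    show (M *ᵥ y) ⬝ᵥ star x = 1; rw [dotProduct_comm]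
    rw [hMy, hsx, hx, single_dotProduct, Pi.single_eq_same, one_mul]
  have hxx : (inner ℂ x x : ℂ) = M i i := by
    show (M *ᵥ x) ⬝ᵥ star x = M i i; rw [dotProduct_comm]
    rw [hsx, hx, single_dotProduct, one_mul, mulVec_single]
    simp
  have hyy : (inner ℂ y y : ℂ) = M⁻¹ i i := by
    show (M *ᵥ y) ⬝ᵥ star y = M⁻¹ i i; rw [dotProduct_comm]
    rw [hMy, hy, star_mulVec, hM.isHermitian.inv.eq, ← dotProduct_mulVec, hsx, hx,
      single_dotProduct, one_mul, mulVec_single]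
    simp
  have h := inner_mul_inner_self_le (𝕜 := ℂ) x y
  rw [hxy, hxx, hyy] at h
  have hyx : (inner ℂ y x : ℂ) = 1 := by
    rw [← inner_conj_symm, hxy]; simp
  rw [hyx] at h
  simpa using h

lemma diag_quad {n : ℕ} (M : Matrix (Fin n) (Fin n) ℂ) (i : Fin n) :
    star (Pi.single i 1 : Fin n → ℂ) ⬝ᵥ M *ᵥ Pi.single i 1 = M i i := by
  have hsx : star (Pi.single i 1 : Fin n → ℂ) = Pi.single i 1 := by
    simp [← Pi.single_star]
  rw [hsx, single_dotProduct, one_mul, mulVec_single]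
  simp

/-- For an n×n Hermitian positive definite complex matrix `M` (n ≥ 1),
every diagonal entry `M i i` is a positive real number and
`trace (M⁻¹) ≥ Σ_i 1 / M_ii`. -/
theorem trace_inv_ge_sum_inv_diag {n : ℕ} (hn : 1 ≤ n)
    (M : Matrix (Fin n) (Fin n) ℂ) (hM : M.PosDef) :
    (∀ i, 0 < (M i i).re ∧ (M i i).im = 0) ∧
      (∑ i, 1 / (M i i).re) ≤ (M⁻¹.trace).re := by
  have hdiag : ∀ i, 0 < (M i i).re := by
    intro i
    have h := hM.re_dotProduct_pos (x := (Pi.single i 1 : Fin n → ℂ))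
      (by simp [Function.ne_iff])
    rwa [diag_quad] at h
  refine ⟨fun i => ⟨hdiag i, ?_⟩, ?_⟩
  · have h : star (M i i) = M i i := by
      conv_rhs => rw [← hM.isHermitian.eq]
      simp [conjTranspose_apply]
    have := congrArg Complex.im h
    simp at this
    linarith
  · rw [Matrix.trace, Complex.re_sum]
    refine Finset.sum_le_sum fun i _ => ?_
    rw [div_le_iff₀ (hdiag i), mul_comm]
    simpa [Matrix.diag] using key_ineq M hM i
end

section
/- Let N ≥ 1, let σ₁,…,σ_N be positive reals, and let P_t > 0. Define r*_i = σ_i⁻¹·P_t / (Σ_{j=1}^{N} σ_j⁻¹). Then each r*_i > 0, Σ_{i=1}^{N} r*_i = P_t, and for every r₁,…,r_N with r_i > 0 and Σ_{i=1}^{N} r_i ≤ P_t one has Σ_{i=1}^{N} 1/(σ_i² r_i) ≥ Σ_{i=1}^{N} 1/(σ_i² r*_i) = (Σ_{i=1}^{N} σ_i⁻¹)²/P_t. -/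
/-- (Proposition 3.) The water-filling-type allocation
`r*_i = σ_i⁻¹ P_t / Σ_j σ_j⁻¹` is positive, sums to `P_t`, and minimizes
`Σ_i 1/(σ_i² r_i)` subject to `Σ_i r_i ≤ P_t`, `r_i > 0`, with optimal value
`(Σ_i σ_i⁻¹)² / P_t`. -/
theorem optimal_power_allocation {N : ℕ} (hN : 1 ≤ N)
    (σ : Fin N → ℝ) (hσ : ∀ i, 0 < σ i)
    (Pt : ℝ) (hPt : 0 < Pt)
    (rstar : Fin N → ℝ) (hrstar : rstar = fun i => (σ i)⁻¹ * Pt / ∑ j, (σ j)⁻¹) :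
    (∀ i, 0 < rstar i) ∧ (∑ i, rstar i = Pt) ∧
      (∀ r : Fin N → ℝ, (∀ i, 0 < r i) → (∑ i, r i) ≤ Pt →
        (∑ i, 1 / (σ i ^ 2 * rstar i)) ≤ ∑ i, 1 / (σ i ^ 2 * r i)) ∧
      (∑ i, 1 / (σ i ^ 2 * rstar i)) = (∑ i, (σ i)⁻¹) ^ 2 / Pt := by
  have hne : (Finset.univ : Finset (Fin N)).Nonempty := by
    simpa [Finset.univ_nonempty_iff] using Fin.pos_iff_nonempty.mp hN
  have hS : 0 < ∑ j, (σ j)⁻¹ :=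
    Finset.sum_pos (fun i _ => inv_pos.mpr (hσ i)) hne
  set S := ∑ j, (σ j)⁻¹ with hSdef
  have hpos : ∀ i, 0 < rstar i := by
    intro i; rw [hrstar]
    exact div_pos (mul_pos (inv_pos.mpr (hσ i)) hPt) hS
  have hsum : ∑ i, rstar i = Pt := by
    rw [hrstar]
    rw [← Finset.sum_div, ← Finset.sum_mul]
    field_simp
    rw [hSdef]
    simp only [one_div]
  -- value at rstar
  have hval : (∑ i, 1 / (σ i ^ 2 * rstar i)) = S ^ 2 / Pt := by
    have : ∀ i, 1 / (σ i ^ 2 * rstar i) = (σ i)⁻¹ * (S / Pt) := by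
      intro i
      rw [hrstar]
      have h1 := (hσ i).ne'
      have h2 := hS.ne'
      have h3 := hPt.ne'
      field_simp
    rw [Finset.sum_congr rfl (fun i _ => this i), ← Finset.sum_mul]
    rw [← hSdef]
    field_simp
  refine ⟨hpos, hsum, ?_, hval⟩
  intro r hr hrle
  rw [hval]
  -- Cauchy–Schwarz
  have key : S ^ 2 ≤ (∑ i, r i) * ∑ i, 1 / (σ i ^ 2 * r i) := by
    have := Finset.sum_mul_sq_le_sq_mul_sq Finset.univ
      (fun i => Real.sqrt (r i)) (fun i => Real.sqrt (1 / (σ i ^ 2 * r i)))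
    have heq : ∀ i : Fin N,
        Real.sqrt (r i) * Real.sqrt (1 / (σ i ^ 2 * r i)) = (σ i)⁻¹ := by
      intro i
      rw [← Real.sqrt_mul (hr i).le]
      have : r i * (1 / (σ i ^ 2 * r i)) = ((σ i)⁻¹) ^ 2 := by
        field_simp [(hr i).ne', (hσ i).ne']
      rw [this, Real.sqrt_sq (inv_pos.mpr (hσ i)).le]
    have hsq1 : ∀ i : Fin N, Real.sqrt (r i) ^ 2 = r i := fun i =>
      Real.sq_sqrt (hr i).le
    have hsq2 : ∀ i : Fin N, Real.sqrt (1 / (σ i ^ 2 * r i)) ^ 2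
        = 1 / (σ i ^ 2 * r i) := fun i =>
      Real.sq_sqrt (one_div_pos.mpr (mul_pos (pow_pos (hσ i) 2) (hr i))).le
    have e1 : (∑ i, Real.sqrt (r i) * Real.sqrt (1 / (σ i ^ 2 * r i))) = S :=
      Finset.sum_congr rfl fun i _ => heq i
    have e2 : (∑ i, Real.sqrt (r i) ^ 2) = ∑ i, r i :=
      Finset.sum_congr rfl fun i _ => hsq1 i
    have e3 : (∑ i, Real.sqrt (1 / (σ i ^ 2 * r i)) ^ 2) = ∑ i, 1 / (σ i ^ 2 * r i) :=
      Finset.sum_congr rfl fun i _ => hsq2 i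
    rw [e1, e2, e3] at this
    exact this
  have hrpos : 0 < ∑ i, r i := Finset.sum_pos (fun i _ => hr i) hne
  have hvpos : 0 ≤ ∑ i, 1 / (σ i ^ 2 * r i) :=
    Finset.sum_nonneg fun i _ =>
      (one_div_pos.mpr (mul_pos (pow_pos (hσ i) 2) (hr i))).le
  rw [div_le_iff₀ hPt]
  calc S ^ 2 ≤ (∑ i, r i) * ∑ i, 1 / (σ i ^ 2 * r i) := key
    _ ≤ Pt * ∑ i, 1 / (σ i ^ 2 * r i) := by
        exact mul_le_mul_of_nonneg_right hrle hvpos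
    _ = (∑ i, 1 / (σ i ^ 2 * r i)) * Pt := by ring
end

section
/- Let W be an n×n complex positive semidefinite matrix and h ∈ ℂⁿ a vector with hᴴWh ≠ 0 (so hᴴWh is a positive real). Define w = (hᴴWh)^{−1/2}·W·h. Then (a) |hᴴw|² = hᴴWh, and (b) the matrix W − w·wᴴ is positive semidefinite; consequently |gᴴw|² ≤ gᴴWg for every vector g ∈ ℂⁿ. -/
open Matrix
open scoped ComplexOrder

private lemma dot_cauchy_schwarz {n : ℕ} (u v : Fin n → ℂ) :
    Complex.normSq (star u ⬝ᵥ v) ≤ (star u ⬝ᵥ u).re * (star v ⬝ᵥ v).re := by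
  have h := inner_mul_inner_self_le (𝕜 := ℂ)
    ((WithLp.equiv 2 (Fin n → ℂ)).symm u) ((WithLp.equiv 2 (Fin n → ℂ)).symm v)
  simp only [WithLp.equiv_symm_apply, EuclideanSpace.inner_toLp_toLp, dotProduct_comm _ (star _)] at h
  have h1 : ‖star v ⬝ᵥ u‖ = ‖star u ⬝ᵥ v‖ := by
    rw [star_dotProduct, norm_star]
  rw [h1] at h
  calc Complex.normSq (star u ⬝ᵥ v) = ‖star u ⬝ᵥ v‖ * ‖star u ⬝ᵥ v‖ := by
        rw [← Complex.sq_norm, sq]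
    _ ≤ _ := h

open scoped MatrixOrder in
private lemma psd_cauchy_schwarz {n : ℕ} {W : Matrix (Fin n) (Fin n) ℂ}
    (hW : W.PosSemidef) (u v : Fin n → ℂ) :
    Complex.normSq (star u ⬝ᵥ W.mulVec v) ≤
      (star u ⬝ᵥ W.mulVec u).re * (star v ⬝ᵥ W.mulVec v).re := by
  set S := CFC.sqrt W with hS
  have hherm : Sᴴ = S := (CFC.sqrt_nonneg W).posSemidef.1
  have key : ∀ a b : Fin n → ℂ,
      star a ⬝ᵥ W.mulVec b = star (S.mulVec a) ⬝ᵥ (S.mulVec b) := by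
    intro a b
    rw [star_mulVec, hherm, ← dotProduct_mulVec, mulVec_mulVec, CFC.sqrt_mul_sqrt_self W hW.nonneg]
  rw [key u v, key u u, key v v]
  exact dot_cauchy_schwarz _ _

/-- (Core of Proposition 5.) For PSD `W` and a vector `h` with
`hᴴWh ≠ 0`, the rank-one beamformer `w = (hᴴWh)^{−1/2} W h` satisfies
`|hᴴw|² = hᴴWh`, `W − w wᴴ` is PSD, and `|gᴴw|² ≤ gᴴWg` for every `g`. -/
theorem rank_one_beamformer_extraction {n : ℕ}
    (W : Matrix (Fin n) (Fin n) ℂ) (hW : W.PosSemidef)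
    (h : Fin n → ℂ) (hne : star h ⬝ᵥ W.mulVec h ≠ 0)
    (w : Fin n → ℂ)
    (hw : w = ((Real.sqrt ((star h ⬝ᵥ W.mulVec h).re))⁻¹ : ℂ) • W.mulVec h) :
    ((Complex.normSq (star h ⬝ᵥ w) : ℂ) = star h ⬝ᵥ W.mulVec h) ∧
      (W - Matrix.vecMulVec w (star w)).PosSemidef ∧
      (∀ g : Fin n → ℂ, Complex.normSq (star g ⬝ᵥ w) ≤ (star g ⬝ᵥ W.mulVec g).re) := by
  set c : ℝ := (star h ⬝ᵥ W.mulVec h).re with hc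
  have hnn : 0 ≤ star h ⬝ᵥ W.mulVec h := hW.dotProduct_mulVec_nonneg h
  obtain ⟨hcre, him⟩ := Complex.nonneg_iff.mp hnn
  have hreal : star h ⬝ᵥ W.mulVec h = (c : ℂ) := by
    apply Complex.ext <;> simp [hc, ← him]
  have hcpos : 0 < c := by
    rcases lt_or_eq_of_le hcre with h' | h'
    · exact h'
    · exact absurd (by apply Complex.ext <;> simp [← h', ← him]) hne
  have hsqrt : Real.sqrt c * Real.sqrt c = c := Real.mul_self_sqrt hcpos.le
  have hsne : Real.sqrt c ≠ 0 := by positivity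
  -- part (3)
  have part3 : ∀ g : Fin n → ℂ,
      Complex.normSq (star g ⬝ᵥ w) ≤ (star g ⬝ᵥ W.mulVec g).re := by
    intro g
    have hdot : star g ⬝ᵥ w =
        ((Real.sqrt c)⁻¹ : ℂ) * (star g ⬝ᵥ W.mulVec h) := by
      rw [hw, dotProduct_smul]; rfl
    have hcs := psd_cauchy_schwarz hW g h
    rw [← hc] at hcs
    have hns : Complex.normSq (star g ⬝ᵥ w)
        = (Real.sqrt c)⁻¹ * (Real.sqrt c)⁻¹ * Complex.normSq (star g ⬝ᵥ W.mulVec h) := by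
      rw [hdot, Complex.normSq_mul]
      congr 1
      simp [← Complex.ofReal_inv, Complex.normSq_ofReal]
    rw [hns]
    have : (Real.sqrt c)⁻¹ * (Real.sqrt c)⁻¹ = c⁻¹ := by
      rw [← mul_inv, hsqrt]
    rw [this]
    rw [inv_mul_le_iff₀ hcpos]
    calc Complex.normSq (star g ⬝ᵥ W.mulVec h)
        ≤ (star g ⬝ᵥ W.mulVec g).re * c := hcs
      _ = c * (star g ⬝ᵥ W.mulVec g).re := mul_comm _ _
  refine ⟨?_, ?_, part3⟩
  · -- part (1)
    have hs : ((Real.sqrt c : ℝ) : ℂ) ≠ 0 := by exact_mod_cast hsne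
    have hdot : star h ⬝ᵥ w = ((Real.sqrt c : ℂ)) := by
      rw [hw, dotProduct_smul, hreal, smul_eq_mul]
      have hcc : (c : ℂ) = (Real.sqrt c : ℂ) * (Real.sqrt c : ℂ) := by
        exact_mod_cast hsqrt.symm
      rw [hcc, inv_mul_cancel_left₀ hs]
    rw [hdot, hreal, Complex.normSq_ofReal, hsqrt]
  · -- part (2)
    refine Matrix.PosSemidef.of_dotProduct_mulVec_nonneg ?_ ?_
    · -- Hermitian
      have h1 : (Matrix.vecMulVec w (star w)).IsHermitian := by
        ext i j
        simp [Matrix.conjTranspose_apply, Matrix.vecMulVec_apply, mul_comm]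
      exact (hW.1.sub h1)
    · intro x
      have hmv : (Matrix.vecMulVec w (star w)).mulVec x = (star w ⬝ᵥ x) • w := by
        ext i
        simp [Matrix.mulVec, Matrix.vecMulVec_apply, dotProduct, Finset.mul_sum,
          Finset.sum_mul, mul_comm, mul_assoc, mul_left_comm]
      have hq : star x ⬝ᵥ (Matrix.vecMulVec w (star w)).mulVec x
          = (Complex.normSq (star x ⬝ᵥ w) : ℂ) := by
        have hxw : star w ⬝ᵥ x = star (star x ⬝ᵥ w) := by
          rw [star_dotProduct]
        rw [hmv, dotProduct_smul, smul_eq_mul, hxw, mul_comm]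
        exact Complex.mul_conj _
      rw [Matrix.sub_mulVec, dotProduct_sub, hq]
      rw [Complex.nonneg_iff]
      constructor
      · simpa using part3 x
      · have := (Complex.nonneg_iff.mp (hW.dotProduct_mulVec_nonneg x)).2
        simp [← this]
end
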